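/- arXiv:2307.15856 — 5 statements merged into one kernel-verified Lean document; each statement's English description precedes it below -/
import Mathlib

section
/- For any bounded set K ⊆ Sˡ (the space of real symmetric ℓ×ℓ matrices with the Frobenius norm), the set B_K = (K + S⁺) ∩ (K + S⁻) is bounded, where S⁺ and S⁻ are the cones of positive semidefinite and negative semidefinite matrices respectively. In fact, if ‖X‖_F ≤ C for all X ∈ K, then ‖X‖_F ≤ 3C for all X ∈ B_K. -/
open Matrix Pointwise

/-- Frobenius norm of a real matrix. -/
noncomputable def frobNorm {l : ℕ} (A : Matrix (Fin l) (Fin l) ℝ) : ℝ :=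
  Real.sqrt (∑ i, ∑ j, (A i j) ^ 2)

lemma frobNorm_eq_norm {l : ℕ} (A : Matrix (Fin l) (Fin l) ℝ) :
    frobNorm A = ‖(WithLp.equiv 2 (Fin l × Fin l → ℝ)).symm (fun p => A p.1 p.2)‖ := by
  rw [EuclideanSpace.norm_eq]
  simp [frobNorm, Fintype.sum_prod_type, Real.norm_eq_abs, sq_abs]

lemma frobNorm_add_le {l : ℕ} (A B : Matrix (Fin l) (Fin l) ℝ) :
    frobNorm (A + B) ≤ frobNorm A + frobNorm B := by
  rw [frobNorm_eq_norm, frobNorm_eq_norm, frobNorm_eq_norm]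
  have h : (WithLp.equiv 2 (Fin l × Fin l → ℝ)).symm (fun p => (A + B) p.1 p.2)
      = (WithLp.equiv 2 (Fin l × Fin l → ℝ)).symm (fun p => A p.1 p.2)
        + (WithLp.equiv 2 (Fin l × Fin l → ℝ)).symm (fun p => B p.1 p.2) := rfl
  rw [h]
  exact norm_add_le _ _

lemma frobNorm_neg {l : ℕ} (A : Matrix (Fin l) (Fin l) ℝ) :
    frobNorm (-A) = frobNorm A := by
  simp [frobNorm]

/-- inner product of two psd matrices is nonnegative -/
lemma inner_psd_nonneg {l : ℕ} {P Q : Matrix (Fin l) (Fin l) ℝ}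
    (hP : P.PosSemidef) (hQ : Q.PosSemidef) :
    0 ≤ ∑ i, ∑ j, P i j * Q i j := by
  obtain ⟨B, hB⟩ : ∃ B : Matrix (Fin l) (Fin l) ℝ, Q = Bᴴ * B := by
    open scoped MatrixOrder in exact CStarAlgebra.nonneg_iff_eq_star_mul_self.mp hQ.nonneg
  have hQij : ∀ i j, Q i j = ∑ k, B k i * B k j := by
    intro i j
    rw [hB]
    simp [Matrix.mul_apply, Matrix.conjTranspose_apply]
  calc (0:ℝ) ≤ ∑ k, dotProduct (B k) (P *ᵥ (B k)) := by
        apply Finset.sum_nonneg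
        intro k _
        simpa using hP.dotProduct_mulVec_nonneg (B k)
    _ = ∑ i, ∑ j, P i j * Q i j := by
        simp only [dotProduct, Matrix.mulVec, hQij]
        rw [Finset.sum_comm]
        congr 1
        ext i
        simp only [Finset.mul_sum, Finset.sum_mul]
        rw [Finset.sum_comm]
        congr 1
        ext j
        congr 1
        ext k
        ring

lemma frobNorm_le_of_psd_add {l : ℕ} {P Q : Matrix (Fin l) (Fin l) ℝ}
    (hP : P.PosSemidef) (hQ : Q.PosSemidef) :
    frobNorm P ≤ frobNorm (P + Q) := by
  apply Real.sqrt_le_sqrt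
  have key : ∑ i, ∑ j, ((P + Q) i j) ^ 2
      = (∑ i, ∑ j, (P i j) ^ 2) + 2 * (∑ i, ∑ j, P i j * Q i j)
        + ∑ i, ∑ j, (Q i j) ^ 2 := by
    simp only [Matrix.add_apply, Finset.mul_sum, ← Finset.sum_add_distrib]
    congr 1; ext i; congr 1; ext j; ring
  have h1 : 0 ≤ ∑ i, ∑ j, P i j * Q i j := inner_psd_nonneg hP hQ
  have h2 : 0 ≤ ∑ i, ∑ j, (Q i j : ℝ) ^ 2 :=
    Finset.sum_nonneg fun i _ => Finset.sum_nonneg fun j _ => sq_nonneg _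
  rw [key]
  linarith

theorem bounded_order_ball {l : ℕ} (K : Set (Matrix (Fin l) (Fin l) ℝ))
    (hK : ∀ X ∈ K, X.IsSymm) (C : ℝ) (hC : ∀ X ∈ K, frobNorm X ≤ C) :
    ∀ X ∈ (K + {A : Matrix (Fin l) (Fin l) ℝ | A.PosSemidef}) ∩
        (K + {A : Matrix (Fin l) (Fin l) ℝ | (-A).PosSemidef}),
      frobNorm X ≤ 3 * C := by
  rintro X ⟨h1, h2⟩
  rw [Set.mem_add] at h1 h2
  obtain ⟨Y, hY, P, hP, hYP⟩ := h1
  obtain ⟨Z, hZ, Q', hQ', hZQ⟩ := h2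
  simp only [Set.mem_setOf_eq] at hP hQ'
  have hPQ : P + -Q' = Z - Y := by
    have h1 : P = X - Y := by rw [← hYP]; abel
    have h2 : Q' = X - Z := by rw [← hZQ]; abel
    rw [h1, h2]; abel
  have hfP : frobNorm P ≤ frobNorm (Z - Y) := by
    rw [← hPQ]
    exact frobNorm_le_of_psd_add hP hQ'
  have hZY : frobNorm (Z - Y) ≤ 2 * C := by
    have : frobNorm (Z - Y) ≤ frobNorm Z + frobNorm (-Y) := by
      rw [show Z - Y = Z + -Y from sub_eq_add_neg Z Y]
      exact frobNorm_add_le Z (-Y)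
    rw [frobNorm_neg] at this
    have hZC := hC Z hZ
    have hYC := hC Y hY
    linarith
  have hX : frobNorm X ≤ frobNorm Y + frobNorm P := by
    rw [← hYP]
    exact frobNorm_add_le Y P
  have hYC := hC Y hY
  linarith
end

section
/- Let F : ℝ → Sˡ be Löwner-convex with one-sided derivatives F′₊(x) and F′₋(x) at every point. Then for every x ∈ ℝ, the subdifferential of F at x equals { V ∈ Sˡ | F′₋(x) ⪯ V ⪯ F′₊(x) }. In particular, ∂F(x) is nonempty and contains both F′₊(x) and F′₋(x). -/
open Matrix Filter Set

def LownerLE {l : ℕ} (A B : Matrix (Fin l) (Fin l) ℝ) : Prop := (B - A).PosSemidef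

def LownerConvexR {l : ℕ} (F : ℝ → Matrix (Fin l) (Fin l) ℝ) : Prop :=
  ∀ x y : ℝ, ∀ α : ℝ, 0 ≤ α → α ≤ 1 →
    LownerLE (F (α * x + (1 - α) * y)) (α • F x + (1 - α) • F y)

def SubdiffR {l : ℕ} (F : ℝ → Matrix (Fin l) (Fin l) ℝ) (x : ℝ) :
    Set (Matrix (Fin l) (Fin l) ℝ) :=
  {V | ∀ y : ℝ, LownerLE ((y - x) • V) (F y - F x)}

namespace SubdiffAux

variable {l : ℕ}

lemma psd_smul {M : Matrix (Fin l) (Fin l) ℝ} (h : M.PosSemidef) {c : ℝ} (hc : 0 ≤ c) :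
    (c • M).PosSemidef := by
  refine PosSemidef.of_dotProduct_mulVec_nonneg (by rw [Matrix.IsHermitian, conjTranspose_smul, star_trivial, h.1]) fun v => ?_
  rw [smul_mulVec, dotProduct_smul]
  exact mul_nonneg hc (h.dotProduct_mulVec_nonneg v)

lemma psd_closed : IsClosed {M : Matrix (Fin l) (Fin l) ℝ | M.PosSemidef} := by
  have : {M : Matrix (Fin l) (Fin l) ℝ | M.PosSemidef} =
      {M | Mᵀ = M} ∩ ⋂ v : Fin l → ℝ, {M | 0 ≤ dotProduct (star v) (M *ᵥ v)} := by
    ext M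
    simp only [Set.mem_setOf_eq, Set.mem_inter_iff, Set.mem_iInter, Matrix.posSemidef_iff_dotProduct_mulVec,
      Matrix.IsHermitian, conjTranspose_eq_transpose_of_trivial]
  rw [this]
  refine IsClosed.inter (isClosed_eq (continuous_id.matrix_transpose) continuous_id)
    (isClosed_iInter fun v => ?_)
  exact isClosed_le continuous_const ((continuous_const).dotProduct
    (continuous_id.matrix_mulVec continuous_const))

lemma le_refl (A : Matrix (Fin l) (Fin l) ℝ) : LownerLE A A := by
  simpa [LownerLE] using Matrix.PosSemidef.zero

lemma le_trans {A B C : Matrix (Fin l) (Fin l) ℝ} (h1 : LownerLE A B) (h2 : LownerLE B C) :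
    LownerLE A C := by
  have : C - A = (C - B) + (B - A) := by abel
  unfold LownerLE at *
  rw [this]; exact h2.add h1

/-- difference quotient -/
noncomputable def Q (F : ℝ → Matrix (Fin l) (Fin l) ℝ) (x t : ℝ) :
    Matrix (Fin l) (Fin l) ℝ := t⁻¹ • (F (x + t) - F x)

variable {F : ℝ → Matrix (Fin l) (Fin l) ℝ}

lemma slope1 (hF : LownerConvexR F) {a b c : ℝ} (hab : a < b) (hbc : b < c) :
    LownerLE ((b - a)⁻¹ • (F b - F a)) ((c - a)⁻¹ • (F c - F a)) := by
  have hba : b - a ≠ 0 := by linarith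
  have hca : c - a ≠ 0 := by linarith
  set α := (c - b) / (c - a) with hα
  have hα0 : 0 ≤ α := div_nonneg (by linarith) (by linarith)
  have hα1 : α ≤ 1 := by rw [hα, div_le_one (by linarith)]; linarith
  have hconv := hF a c α hα0 hα1
  have hb : α * a + (1 - α) * c = b := by rw [hα]; field_simp; ring
  rw [hb] at hconv
  have key : (c - a)⁻¹ • (F c - F a) - (b - a)⁻¹ • (F b - F a)
      = (b - a)⁻¹ • (α • F a + (1 - α) • F c - F b) := by
    rw [hα]; match_scalars <;> field_simp <;> first | ring1 | exact Or.inl (by ring) | tauto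
  unfold LownerLE at *
  rw [key]
  exact psd_smul hconv (inv_nonneg.mpr (by linarith))

lemma slope2 (hF : LownerConvexR F) {a b c : ℝ} (hab : a < b) (hbc : b < c) :
    LownerLE ((c - a)⁻¹ • (F c - F a)) ((c - b)⁻¹ • (F c - F b)) := by
  have hcb : c - b ≠ 0 := by linarith
  have hca : c - a ≠ 0 := by linarith
  set α := (c - b) / (c - a) with hα
  have hα0 : 0 ≤ α := div_nonneg (by linarith) (by linarith)
  have hα1 : α ≤ 1 := by rw [hα, div_le_one (by linarith)]; linarith
  have hconv := hF a c α hα0 hα1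
  have hb : α * a + (1 - α) * c = b := by rw [hα]; field_simp; ring
  rw [hb] at hconv
  have key : (c - b)⁻¹ • (F c - F b) - (c - a)⁻¹ • (F c - F a)
      = (c - b)⁻¹ • (α • F a + (1 - α) • F c - F b) := by
    rw [hα]; match_scalars <;> field_simp <;> first | ring1 | exact Or.inl (by ring) | tauto
  unfold LownerLE at *
  rw [key]
  exact psd_smul hconv (inv_nonneg.mpr (by linarith))

lemma Q_eq_slope (x t : ℝ) : Q F x t = t⁻¹ • (F (x + t) - F x) := rfl

lemma Q_symm (x t : ℝ) : Q F x t = (x - (x + t))⁻¹ • (F x - F (x + t)) := by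
  unfold Q
  have : x - (x + t) = -t := by ring
  rw [this, inv_neg, neg_smul, ← smul_neg, neg_sub]



lemma q_mono_pos (hF : LownerConvexR F) {x s t : ℝ} (hs : 0 < s) (hst : s < t) :
    LownerLE (Q F x s) (Q F x t) := by
  have h := slope1 hF (a := x) (b := x + s) (c := x + t) (by linarith) (by linarith)
  simpa [Q, add_sub_cancel_left] using h

lemma q_mono_neg (hF : LownerConvexR F) {x s t : ℝ} (hst : s < t) (ht : t < 0) :
    LownerLE (Q F x s) (Q F x t) := by
  have h := slope2 hF (a := x + s) (b := x + t) (c := x) (by linarith) (by linarith)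
  rwa [← Q_symm, ← Q_symm] at h

lemma q_cross (hF : LownerConvexR F) {x s t : ℝ} (hs : s < 0) (ht : 0 < t) :
    LownerLE (Q F x s) (Q F x t) := by
  have h1 := slope1 hF (a := x + s) (b := x) (c := x + t) (by linarith) (by linarith)
  have h2 := slope2 hF (a := x + s) (b := x) (c := x + t) (by linarith) (by linarith)
  rw [← Q_symm] at h1
  rw [show x + t - x = t by ring] at h2
  exact le_trans h1 h2

lemma psd_limit {f : ℝ → Matrix (Fin l) (Fin l) ℝ} {L : Matrix (Fin l) (Fin l) ℝ}
    {lf : Filter ℝ} [lf.NeBot] (hf : Tendsto f lf (nhds L))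
    (h : ∀ᶠ t in lf, (f t).PosSemidef) : L.PosSemidef :=
  psd_closed.mem_of_tendsto hf h

variable {P M : Matrix (Fin l) (Fin l) ℝ} {x : ℝ}

lemma Fp_le_q (hF : LownerConvexR F)
    (hP : Tendsto (fun t : ℝ => t⁻¹ • (F (x + t) - F x)) (nhdsWithin 0 (Ioi 0)) (nhds P))
    {t : ℝ} (ht : 0 < t) : LownerLE P (Q F x t) := by
  have hIoo : Ioo (0:ℝ) t ∈ nhdsWithin 0 (Ioi 0) :=
    Ioo_mem_nhdsGT_of_mem ⟨le_rfl, ht⟩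
  refine psd_limit (f := fun s => Q F x t - Q F x s) (tendsto_const_nhds.sub hP) ?_
  filter_upwards [hIoo] with s hs
  exact q_mono_pos hF hs.1 hs.2

lemma q_le_Fm (hF : LownerConvexR F)
    (hM : Tendsto (fun t : ℝ => t⁻¹ • (F (x + t) - F x)) (nhdsWithin 0 (Iio 0)) (nhds M))
    {t : ℝ} (ht : t < 0) : LownerLE (Q F x t) M := by
  have hIoo : Ioo t (0:ℝ) ∈ nhdsWithin 0 (Iio 0) :=
    Ioo_mem_nhdsLT_of_mem ⟨ht, le_rfl⟩
  refine psd_limit (f := fun s => Q F x s - Q F x t) (hM.sub tendsto_const_nhds) ?_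
  filter_upwards [hIoo] with s hs
  exact q_mono_neg hF hs.1 hs.2

lemma Fm_le_q (hF : LownerConvexR F)
    (hM : Tendsto (fun t : ℝ => t⁻¹ • (F (x + t) - F x)) (nhdsWithin 0 (Iio 0)) (nhds M))
    {t : ℝ} (ht : 0 < t) : LownerLE M (Q F x t) := by
  refine psd_limit (f := fun s => Q F x t - Q F x s) (tendsto_const_nhds.sub hM) ?_
  filter_upwards [self_mem_nhdsWithin] with s hs
  exact q_cross hF hs ht

lemma Fm_le_Fp (hF : LownerConvexR F)
    (hP : Tendsto (fun t : ℝ => t⁻¹ • (F (x + t) - F x)) (nhdsWithin 0 (Ioi 0)) (nhds P))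
    (hM : Tendsto (fun t : ℝ => t⁻¹ • (F (x + t) - F x)) (nhdsWithin 0 (Iio 0)) (nhds M)) :
    LownerLE M P := by
  refine psd_limit (f := fun t => Q F x t - M) (hP.sub tendsto_const_nhds) ?_
  filter_upwards [self_mem_nhdsWithin] with t htp
  exact Fm_le_q hF hM htp

lemma mem_subdiff (hF : LownerConvexR F)
    (hP : Tendsto (fun t : ℝ => t⁻¹ • (F (x + t) - F x)) (nhdsWithin 0 (Ioi 0)) (nhds P))
    (hM : Tendsto (fun t : ℝ => t⁻¹ • (F (x + t) - F x)) (nhdsWithin 0 (Iio 0)) (nhds M))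
    {V : Matrix (Fin l) (Fin l) ℝ} (h1 : LownerLE M V) (h2 : LownerLE V P) :
    V ∈ SubdiffR F x := by
  intro y
  have hxy : x + (y - x) = y := by ring
  rcases lt_trichotomy y x with hy | hy | hy
  · have ht0 : y - x ≠ 0 := by intro h; linarith [sub_eq_zero.mp h]
    have hq : LownerLE (Q F x (y - x)) V := le_trans (q_le_Fm hF hM (by linarith)) h1
    show (F y - F x - (y - x) • V).PosSemidef
    have key : F y - F x - (y - x) • V = (-(y - x)) • (V - Q F x (y - x)) := by
      rw [Q_eq_slope, hxy, neg_smul, smul_sub, smul_inv_smul₀ ht0, neg_sub]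
    rw [key]
    exact psd_smul hq (by linarith)
  · subst hy
    show (F y - F y - (y - y) • V).PosSemidef
    simpa using Matrix.PosSemidef.zero
  · have ht0 : y - x ≠ 0 := by intro h; linarith [sub_eq_zero.mp h]
    have hq : LownerLE V (Q F x (y - x)) := le_trans h2 (Fp_le_q hF hP (by linarith))
    show (F y - F x - (y - x) • V).PosSemidef
    have key : F y - F x - (y - x) • V = (y - x) • (Q F x (y - x) - V) := by
      rw [Q_eq_slope, hxy, smul_sub, smul_inv_smul₀ ht0]
    rw [key]
    exact psd_smul hq (by linarith)

lemma subdiff_le (hP : Tendsto (fun t : ℝ => t⁻¹ • (F (x + t) - F x)) (nhdsWithin 0 (Ioi 0)) (nhds P))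
    (hM : Tendsto (fun t : ℝ => t⁻¹ • (F (x + t) - F x)) (nhdsWithin 0 (Iio 0)) (nhds M))
    {V : Matrix (Fin l) (Fin l) ℝ} (hV : V ∈ SubdiffR F x) :
    LownerLE M V ∧ LownerLE V P := by
  constructor
  · refine psd_limit (f := fun t => V - Q F x t) (tendsto_const_nhds.sub hM) ?_
    filter_upwards [self_mem_nhdsWithin] with t ht
    have h := hV (x + t)
    rw [show x + t - x = t by ring] at h
    have ht0 : t ≠ 0 := ne_of_lt ht
    have key : V - Q F x t = (-t⁻¹) • (F (x + t) - F x - t • V) := by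
      rw [Q_eq_slope]; match_scalars <;> field_simp
    rw [key]
    exact psd_smul h (by rw [neg_nonneg]; exact inv_nonpos.mpr (le_of_lt ht))
  · refine psd_limit (f := fun t => Q F x t - V) (hP.sub tendsto_const_nhds) ?_
    filter_upwards [self_mem_nhdsWithin] with t ht
    have h := hV (x + t)
    rw [show x + t - x = t by ring] at h
    have ht0 : t ≠ 0 := ne_of_gt ht
    have key : Q F x t - V = t⁻¹ • (F (x + t) - F x - t • V) := by
      rw [Q_eq_slope]; match_scalars <;> field_simp
    rw [key]
    exact psd_smul h (inv_nonneg.mpr (le_of_lt ht))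

end SubdiffAux

open SubdiffAux

theorem subdiffR_eq_order_interval {l : ℕ}
    (F : ℝ → Matrix (Fin l) (Fin l) ℝ) (hF : LownerConvexR F)
    (Fp Fm : ℝ → Matrix (Fin l) (Fin l) ℝ)
    (hFp : ∀ x, Tendsto (fun t : ℝ => t⁻¹ • (F (x + t) - F x)) (nhdsWithin 0 (Ioi 0))
      (nhds (Fp x)))
    (hFm : ∀ x, Tendsto (fun t : ℝ => t⁻¹ • (F (x + t) - F x)) (nhdsWithin 0 (Iio 0))
      (nhds (Fm x))) (x : ℝ) :
    SubdiffR F x = {V | LownerLE (Fm x) V ∧ LownerLE V (Fp x)} ∧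
    Fp x ∈ SubdiffR F x ∧ Fm x ∈ SubdiffR F x ∧ (SubdiffR F x).Nonempty := by
  have hmp : LownerLE (Fm x) (Fp x) := Fm_le_Fp hF (hFp x) (hFm x)
  have hp : Fp x ∈ SubdiffR F x := mem_subdiff hF (hFp x) (hFm x) hmp (le_refl _)
  have hm : Fm x ∈ SubdiffR F x := mem_subdiff hF (hFp x) (hFm x) (le_refl _) hmp
  refine ⟨Set.ext fun V => ⟨fun h => subdiff_le (hFp x) (hFm x) h,
    fun h => mem_subdiff hF (hFp x) (hFm x) h.1 h.2⟩, hp, hm, ⟨Fp x, hp⟩⟩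
end

section
/- Let F : ℝ → Sˡ be Löwner-convex, and suppose the diagonal entry function F_{ii} is differentiable at a point x ∈ ℝ for some index i. Then for every j ∈ {1,…,ℓ}, the entry functions F_{ij} = F_{ji} are differentiable at x. -/
open Matrix Set Filter Topology

section Aux

/-- One-sided (right) derivative expressed via slopes. -/
def HasRD (f : ℝ → ℝ) (x a : ℝ) : Prop := Tendsto (slope f x) (𝓝[>] x) (𝓝 a)

/-- One-sided (left) derivative expressed via slopes. -/
def HasLD (f : ℝ → ℝ) (x a : ℝ) : Prop := Tendsto (slope f x) (𝓝[<] x) (𝓝 a)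

lemma slope_comb (f g : ℝ → ℝ) (c d x y : ℝ) :
    slope (fun t => c * f t + d * g t) x y = c * slope f x y + d * slope g x y := by
  simp only [slope_def_field]
  ring

lemma HasRD.comb {f g : ℝ → ℝ} {x a b : ℝ} (hf : HasRD f x a) (hg : HasRD g x b) (c d : ℝ) :
    HasRD (fun t => c * f t + d * g t) x (c * a + d * b) := by
  have h : slope (fun t => c * f t + d * g t) x = fun y => c * slope f x y + d * slope g x y :=
    funext fun y => slope_comb f g c d x y
  rw [HasRD, h]
  exact ((hf.const_mul c).add (hg.const_mul d))

lemma HasLD.comb {f g : ℝ → ℝ} {x a b : ℝ} (hf : HasLD f x a) (hg : HasLD g x b) (c d : ℝ) :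
    HasLD (fun t => c * f t + d * g t) x (c * a + d * b) := by
  have h : slope (fun t => c * f t + d * g t) x = fun y => c * slope f x y + d * slope g x y :=
    funext fun y => slope_comb f g c d x y
  rw [HasLD, h]
  exact ((hf.const_mul c).add (hg.const_mul d))

lemma hasDerivAt_of_RD_LD {f : ℝ → ℝ} {x a : ℝ} (hr : HasRD f x a) (hl : HasLD f x a) :
    HasDerivAt f a x := by
  have h1 : HasDerivWithinAt f a (Ici x) x := by
    rw [hasDerivWithinAt_iff_tendsto_slope, Ici_sdiff_left]; exact hr
  have h2 : HasDerivWithinAt f a (Iic x) x := by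
    rw [hasDerivWithinAt_iff_tendsto_slope, Iic_diff_right]; exact hl
  have h3 := h2.union h1
  rw [Iic_union_Ici] at h3
  exact h3.hasDerivAt univ_mem

lemma DifferentiableAt.hasRD {f : ℝ → ℝ} {x : ℝ} (h : DifferentiableAt ℝ f x) :
    HasRD f x (deriv f x) := by
  have h1 := (h.hasDerivAt.hasDerivWithinAt (s := Ici x))
  rw [hasDerivWithinAt_iff_tendsto_slope, Ici_sdiff_left] at h1
  exact h1

lemma DifferentiableAt.hasLD {f : ℝ → ℝ} {x : ℝ} (h : DifferentiableAt ℝ f x) :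
    HasLD f x (deriv f x) := by
  have h1 := (h.hasDerivAt.hasDerivWithinAt (s := Iic x))
  rw [hasDerivWithinAt_iff_tendsto_slope, Iic_diff_right] at h1
  exact h1

lemma convex_slope_mono {g : ℝ → ℝ} (hg : ConvexOn ℝ univ g) (x : ℝ) {u v : ℝ}
    (hu : u ≠ x) (hv : v ≠ x) (huv : u ≤ v) : slope g x u ≤ slope g x v := by
  rw [slope_def_field, slope_def_field]
  exact hg.secant_mono trivial trivial trivial hu hv huv

lemma convex_hasRD {g : ℝ → ℝ} (hg : ConvexOn ℝ univ g) (x : ℝ) : ∃ a, HasRD g x a := by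
  refine ⟨sInf (slope g x '' Ioi x), ?_⟩
  have mono : MonotoneOn (slope g x) (Ioi x) := fun u hu v hv huv =>
    convex_slope_mono hg x (ne_of_gt hu) (ne_of_gt hv) huv
  have bdd : BddBelow (slope g x '' Ioi x) := by
    refine ⟨slope g x (x - 1), ?_⟩
    rintro _ ⟨u, hu, rfl⟩
    exact convex_slope_mono hg x (by linarith) (ne_of_gt hu) (by rw [mem_Ioi] at hu; linarith)
  exact mono.tendsto_nhdsGT bdd

lemma convex_hasLD {g : ℝ → ℝ} (hg : ConvexOn ℝ univ g) (x : ℝ) : ∃ a, HasLD g x a := by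
  refine ⟨sSup (slope g x '' Iio x), ?_⟩
  have mono : MonotoneOn (slope g x) (Iio x) := fun u hu v hv huv =>
    convex_slope_mono hg x (ne_of_lt hu) (ne_of_lt hv) huv
  have bdd : BddAbove (slope g x '' Iio x) := by
    refine ⟨slope g x (x + 1), ?_⟩
    rintro _ ⟨u, hu, rfl⟩
    exact convex_slope_mono hg x (ne_of_lt hu) (by linarith) (by rw [mem_Iio] at hu; linarith)
  exact mono.tendsto_nhdsLT bdd

lemma convex_LD_le_RD {g : ℝ → ℝ} (hg : ConvexOn ℝ univ g) {x a b : ℝ}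
    (hr : HasRD g x a) (hl : HasLD g x b) : b ≤ a := by
  have h1 : ∀ v ∈ Ioi x, b ≤ slope g x v := by
    intro v hv
    refine le_of_tendsto hl ?_
    filter_upwards [self_mem_nhdsWithin] with u hu
    exact convex_slope_mono hg x (ne_of_lt hu) (ne_of_gt hv) (le_of_lt (lt_trans hu hv))
  refine ge_of_tendsto hr ?_
  filter_upwards [self_mem_nhdsWithin] with v hv using h1 v hv

lemma qf_convex {l : ℕ} {F : ℝ → Matrix (Fin l) (Fin l) ℝ} (hF : LownerConvexR F)
    (v : Fin l → ℝ) : ConvexOn ℝ univ (fun t => v ⬝ᵥ (F t) *ᵥ v) := by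
  refine ⟨convex_univ, fun x _ y _ a b ha hb hab => ?_⟩
  have h := hF x y a ha (by linarith)
  have hb' : 1 - a = b := by linarith
  have h2 := h.dotProduct_mulVec_nonneg v
  rw [star_trivial] at h2
  simp only [sub_mulVec, dotProduct_sub, add_mulVec, dotProduct_add, smul_mulVec,
    dotProduct_smul, smul_eq_mul] at h2
  simp only [smul_eq_mul]
  rw [hb'] at h2
  linarith

lemma qf_entry {l : ℕ} (M : Matrix (Fin l) (Fin l) ℝ) (hM : M.IsSymm) (i j : Fin l) (s : ℝ) :
    ((Pi.single i 1 : Fin l → ℝ) + s • (Pi.single j 1 : Fin l → ℝ)) ⬝ᵥ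
        M *ᵥ ((Pi.single i 1 : Fin l → ℝ) + s • (Pi.single j 1 : Fin l → ℝ))
      = M i i + 2 * s * M i j + s ^ 2 * M j j := by
  have hji : M j i = M i j := by
    conv_lhs => rw [← hM]
    rfl
  simp [mulVec_add, mulVec_smul, dotProduct_add, dotProduct_smul, mulVec_single,
    single_dotProduct, hji]
  ring

lemma qf_single {l : ℕ} (M : Matrix (Fin l) (Fin l) ℝ) (j : Fin l) :
    (Pi.single j 1 : Fin l → ℝ) ⬝ᵥ M *ᵥ (Pi.single j 1 : Fin l → ℝ) = M j j := by
  simp [mulVec_single, single_dotProduct]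

lemma key_alg {pr pl qr ql : ℝ} (hq : ql ≤ qr)
    (h : ∀ s : ℝ, 0 ≤ 2 * s * (pr - pl) + s ^ 2 * (qr - ql)) : pr = pl := by
  by_contra hne
  set c := qr - ql with hc
  set d := pr - pl with hd
  have hd0 : d ≠ 0 := sub_ne_zero.mpr hne
  have hc0 : 0 ≤ c := by rw [hc]; linarith
  have hc1 : (0 : ℝ) < c + 1 := by linarith
  have hs := h (-d / (c + 1))
  have h4 : 0 ≤ (2 * (-d / (c + 1)) * d + (-d / (c + 1)) ^ 2 * c) * (c + 1) ^ 2 :=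
    mul_nonneg hs (by positivity)
  have h5 : (2 * (-d / (c + 1)) * d + (-d / (c + 1)) ^ 2 * c) * (c + 1) ^ 2
      = -(d ^ 2) * (c + 2) := by
    field_simp
    ring
  rw [h5] at h4
  have hd2 : 0 < d ^ 2 := by positivity
  nlinarith

end Aux

theorem entries_differentiable_of_diagonal_differentiable {l : ℕ}
    (F : ℝ → Matrix (Fin l) (Fin l) ℝ) (hF : LownerConvexR F)
    (hsymm : ∀ t, (F t).IsSymm) (x : ℝ) (i : Fin l)
    (hdiag : DifferentiableAt ℝ (fun t => F t i i) x) :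
    ∀ j : Fin l, DifferentiableAt ℝ (fun t => F t i j) x ∧
      DifferentiableAt ℝ (fun t => F t j i) x := by
  intro j
  set a := deriv (fun t => F t i i) x with ha
  have hra : HasRD (fun t => F t i i) x a := hdiag.hasRD
  have hla : HasLD (fun t => F t i i) x a := hdiag.hasLD
  -- convexity of the parametrized quadratic forms
  have hgconv : ∀ s : ℝ,
      ConvexOn ℝ univ (fun t => F t i i + 2 * s * F t i j + s ^ 2 * F t j j) := by
    intro s
    have h := qf_convex hF ((Pi.single i 1 : Fin l → ℝ) + s • (Pi.single j 1 : Fin l → ℝ))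
    have he : (fun t => ((Pi.single i 1 : Fin l → ℝ) + s • (Pi.single j 1 : Fin l → ℝ)) ⬝ᵥ
        (F t) *ᵥ ((Pi.single i 1 : Fin l → ℝ) + s • (Pi.single j 1 : Fin l → ℝ)))
        = fun t => F t i i + 2 * s * F t i j + s ^ 2 * F t j j :=
      funext fun t => qf_entry (F t) (hsymm t) i j s
    rwa [he] at h
  have hjjconv : ConvexOn ℝ univ (fun t => F t j j) := by
    have h := qf_convex hF (Pi.single j 1 : Fin l → ℝ)
    have he : (fun t => (Pi.single j 1 : Fin l → ℝ) ⬝ᵥ (F t) *ᵥ (Pi.single j 1 : Fin l → ℝ))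
        = fun t => F t j j := funext fun t => qf_single (F t) j
    rwa [he] at h
  obtain ⟨qr, hqr⟩ := convex_hasRD hjjconv x
  obtain ⟨ql, hql⟩ := convex_hasLD hjjconv x
  have hqlr : ql ≤ qr := convex_LD_le_RD hjjconv hqr hql
  obtain ⟨r1, hr1⟩ := convex_hasRD (hgconv 1) x
  obtain ⟨l1, hl1⟩ := convex_hasLD (hgconv 1) x
  -- one-sided derivatives of the off-diagonal entry
  set pr := (1/2) * r1 + (-(1/2)) * (1 * a + 1 * qr) with hpr_def
  set pl := (1/2) * l1 + (-(1/2)) * (1 * a + 1 * ql) with hpl_def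
  have hfe : (fun t => (1/2) * (F t i i + 2 * 1 * F t i j + 1 ^ 2 * F t j j)
      + (-(1/2)) * (1 * F t i i + 1 * F t j j)) = fun t => F t i j :=
    funext fun t => by ring
  have hpr : HasRD (fun t => F t i j) x pr := by
    have h := hr1.comb (hra.comb hqr 1 1) (1/2) (-(1/2))
    rwa [hfe] at h
  have hpl : HasLD (fun t => F t i j) x pl := by
    have h := hl1.comb (hla.comb hql 1 1) (1/2) (-(1/2))
    rwa [hfe] at h
  -- the key inequality for every s
  have hkey : ∀ s : ℝ, 0 ≤ 2 * s * (pr - pl) + s ^ 2 * (qr - ql) := by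
    intro s
    have hge : (fun t => 1 * (1 * F t i i + 2 * s * F t i j) + s ^ 2 * F t j j)
        = fun t => F t i i + 2 * s * F t i j + s ^ 2 * F t j j := funext fun t => by ring
    have hRs : HasRD (fun t => F t i i + 2 * s * F t i j + s ^ 2 * F t j j) x
        (1 * (1 * a + 2 * s * pr) + s ^ 2 * qr) := by
      have h := (hra.comb hpr 1 (2 * s)).comb hqr 1 (s ^ 2)
      rwa [hge] at h
    have hLs : HasLD (fun t => F t i i + 2 * s * F t i j + s ^ 2 * F t j j) x
        (1 * (1 * a + 2 * s * pl) + s ^ 2 * ql) := by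
      have h := (hla.comb hpl 1 (2 * s)).comb hql 1 (s ^ 2)
      rwa [hge] at h
    have := convex_LD_le_RD (hgconv s) hRs hLs
    nlinarith [this]
  have hpp : pr = pl := key_alg hqlr hkey
  have hder : HasDerivAt (fun t => F t i j) pr x := hasDerivAt_of_RD_LD hpr (hpp ▸ hpl)
  have hdiff : DifferentiableAt ℝ (fun t => F t i j) x := hder.differentiableAt
  refine ⟨hdiff, ?_⟩
  have hji : (fun t => F t j i) = fun t => F t i j := by
    funext t
    conv_lhs => rw [← hsymm t]
    rfl
  rwa [hji]
end

section
/- Let F : ℝ → Sˡ be Löwner-convex such that every diagonal entry F_{ii} is differentiable at a point x ∈ ℝ. Then F is differentiable at x (every entry function F_{ij} is differentiable at x). -/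
open Matrix

open Set Filter Topology

private lemma slope_mono_univ {f : ℝ → ℝ} (hf : ConvexOn ℝ univ f) (x : ℝ) :
    MonotoneOn (slope f x) {x}ᶜ := by
  have := hf.slope_mono (mem_univ x)
  simpa [Set.compl_eq_univ_diff] using this

private lemma tendsto_slope_right {f : ℝ → ℝ} (hf : ConvexOn ℝ univ f) (x : ℝ) :
    Tendsto (slope f x) (𝓝[>] x) (𝓝 (sInf (slope f x '' Ioi x))) := by
  apply MonotoneOn.tendsto_nhdsGT
  · exact (slope_mono_univ hf x).mono (fun y hy => ne_of_gt (mem_Ioi.mp hy))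
  · refine ⟨slope f x (x - 1), ?_⟩
    rintro _ ⟨y, hy, rfl⟩
    exact slope_mono_univ hf x (by norm_num) (ne_of_gt (mem_Ioi.mp hy))
      (by linarith [mem_Ioi.mp hy])

private lemma tendsto_slope_left {f : ℝ → ℝ} (hf : ConvexOn ℝ univ f) (x : ℝ) :
    Tendsto (slope f x) (𝓝[<] x) (𝓝 (sSup (slope f x '' Iio x))) := by
  apply MonotoneOn.tendsto_nhdsLT
  · exact (slope_mono_univ hf x).mono (fun y hy => ne_of_lt (mem_Iio.mp hy))
  · refine ⟨slope f x (x + 1), ?_⟩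
    rintro _ ⟨y, hy, rfl⟩
    exact slope_mono_univ hf x (ne_of_lt (mem_Iio.mp hy)) (by norm_num)
      (by linarith [mem_Iio.mp hy])

private lemma left_le_right {f : ℝ → ℝ} (hf : ConvexOn ℝ univ f) (x : ℝ) :
    sSup (slope f x '' Iio x) ≤ sInf (slope f x '' Ioi x) := by
  apply le_csInf ⟨_, mem_image_of_mem _ (show x + 1 ∈ Ioi x by norm_num)⟩
  rintro _ ⟨z, hz, rfl⟩
  apply csSup_le ⟨_, mem_image_of_mem _ (show x - 1 ∈ Iio x by norm_num)⟩
  rintro _ ⟨y, hy, rfl⟩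
  exact slope_mono_univ hf x (ne_of_lt (mem_Iio.mp hy)) (ne_of_gt (mem_Ioi.mp hz))
    (le_of_lt ((mem_Iio.mp hy).trans (mem_Ioi.mp hz)))

private lemma diff_of_convex_add {f g : ℝ → ℝ} (hf : ConvexOn ℝ univ f)
    (hg : ConvexOn ℝ univ g) {x : ℝ}
    (hd : DifferentiableAt ℝ (fun y => f y + g y) x) :
    DifferentiableAt ℝ f x := by
  set Am := sSup (slope f x '' Iio x) with hAm
  set Ap := sInf (slope f x '' Ioi x) with hAp
  set Bm := sSup (slope g x '' Iio x) with hBm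
  set Bp := sInf (slope g x '' Ioi x) with hBp
  have hA : Am ≤ Ap := left_le_right hf x
  have hB : Bm ≤ Bp := left_le_right hg x
  have hslope : ∀ y, slope (fun y => f y + g y) x y = slope f x y + slope g x y := by
    intro y; simp only [slope_def_field]; ring
  have hds : Tendsto (slope (fun y => f y + g y) x) (𝓝[≠] x)
      (𝓝 (deriv (fun y => f y + g y) x)) :=
    hasDerivAt_iff_tendsto_slope.mp hd.hasDerivAt
  set d := deriv (fun y => f y + g y) x
  have hright : Ap + Bp = d := by
    have h1 : Tendsto (slope (fun y => f y + g y) x) (𝓝[>] x) (𝓝 (Ap + Bp)) := by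
      have := (tendsto_slope_right hf x).add (tendsto_slope_right hg x)
      refine this.congr fun y => (hslope y).symm
    have h2 : Tendsto (slope (fun y => f y + g y) x) (𝓝[>] x) (𝓝 d) :=
      hds.mono_left (nhdsWithin_mono _ (fun y hy => ne_of_gt (mem_Ioi.mp hy)))
    exact tendsto_nhds_unique h1 h2
  have hleft : Am + Bm = d := by
    have h1 : Tendsto (slope (fun y => f y + g y) x) (𝓝[<] x) (𝓝 (Am + Bm)) := by
      have := (tendsto_slope_left hf x).add (tendsto_slope_left hg x)
      refine this.congr fun y => (hslope y).symm
    have h2 : Tendsto (slope (fun y => f y + g y) x) (𝓝[<] x) (𝓝 d) :=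
      hds.mono_left (nhdsWithin_mono _ (fun y hy => ne_of_lt (mem_Iio.mp hy)))
    exact tendsto_nhds_unique h1 h2
  have hAe : Am = Ap := le_antisymm hA (by linarith)
  have : HasDerivAt f Ap x := by
    rw [hasDerivAt_iff_tendsto_slope, ← nhdsLT_sup_nhdsGT, tendsto_sup]
    exact ⟨hAe ▸ tendsto_slope_left hf x, tendsto_slope_right hf x⟩
  exact this.differentiableAt

open Matrix in
private lemma qconv {l : ℕ} {F : ℝ → Matrix (Fin l) (Fin l) ℝ}
    (hF : ∀ x y : ℝ, ∀ α : ℝ, 0 ≤ α → α ≤ 1 →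
      (α • F x + (1 - α) • F y - F (α * x + (1 - α) * y)).PosSemidef)
    (v : Fin l → ℝ) :
    ConvexOn ℝ univ (fun t => v ⬝ᵥ (F t).mulVec v) := by
  refine ⟨convex_univ, ?_⟩
  intro p _ q _ a b ha hb hab
  have hp := (hF p q a ha (by linarith)).dotProduct_mulVec_nonneg v
  have hb' : 1 - a = b := by linarith
  simp only [star_trivial, sub_mulVec, add_mulVec, smul_mulVec, dotProduct_sub,
    dotProduct_add, dotProduct_smul, smul_eq_mul, hb'] at hp
  simp only [smul_eq_mul]
  linarith

open Matrix in
private lemma qform {l : ℕ} (A : Matrix (Fin l) (Fin l) ℝ) (i j : Fin l) (c : ℝ) :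
    ((Pi.single i 1 : Fin l → ℝ) + c • (Pi.single j 1 : Fin l → ℝ)) ⬝ᵥ A.mulVec ((Pi.single i 1 : Fin l → ℝ) + c • (Pi.single j 1 : Fin l → ℝ))
      = A i i + c * A i j + c * A j i + c * c * A j j := by
  simp [mulVec_add, mulVec_smul, mulVec_single, add_dotProduct, smul_dotProduct,
    single_dotProduct, smul_eq_mul, Pi.add_apply, Pi.smul_apply]
  ring

open Matrix in
theorem differentiable_of_diagonal_differentiable' {l : ℕ}
    (F : ℝ → Matrix (Fin l) (Fin l) ℝ)
    (hF : ∀ x y : ℝ, ∀ α : ℝ, 0 ≤ α → α ≤ 1 →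
      (α • F x + (1 - α) • F y - F (α * x + (1 - α) * y)).PosSemidef)
    (hsymm : ∀ t, (F t).IsSymm) (x : ℝ)
    (hdiag : ∀ i : Fin l, DifferentiableAt ℝ (fun t => F t i i) x) :
    ∀ i j : Fin l, DifferentiableAt ℝ (fun t => F t i j) x := by
  intro i j
  have hqv : ConvexOn ℝ univ
      (fun t => F t i i + 1 * F t i j + 1 * F t j i + 1 * 1 * F t j j) := by
    have h := qconv hF ((Pi.single i 1 : Fin l → ℝ) + (1:ℝ) • (Pi.single j 1 : Fin l → ℝ))
    simpa only [qform] using h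
  have hqw : ConvexOn ℝ univ
      (fun t => F t i i + (-1) * F t i j + (-1) * F t j i + (-1) * (-1) * F t j j) := by
    have h := qconv hF ((Pi.single i 1 : Fin l → ℝ) + (-1:ℝ) • (Pi.single j 1 : Fin l → ℝ))
    simpa only [qform] using h
  have hs : ∀ t, F t j i = F t i j := fun t => (hsymm t).apply i j
  have hsumd : DifferentiableAt ℝ
      (fun y => (F y i i + 1 * F y i j + 1 * F y j i + 1 * 1 * F y j j)
        + (F y i i + (-1) * F y i j + (-1) * F y j i + (-1) * (-1) * F y j j)) x := by
    have heq : (fun y => (F y i i + 1 * F y i j + 1 * F y j i + 1 * 1 * F y j j)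
        + (F y i i + (-1) * F y i j + (-1) * F y j i + (-1) * (-1) * F y j j))
        = fun y => 2 * F y i i + 2 * F y j j := funext fun y => by ring
    rw [heq]
    exact ((hdiag i).const_mul 2).add ((hdiag j).const_mul 2)
  have hsumd' : DifferentiableAt ℝ
      (fun y => (F y i i + (-1) * F y i j + (-1) * F y j i + (-1) * (-1) * F y j j)
        + (F y i i + 1 * F y i j + 1 * F y j i + 1 * 1 * F y j j)) x := by
    refine hsumd.congr_of_eventuallyEq (Filter.Eventually.of_forall fun y => by ring)
  have hv := diff_of_convex_add hqv hqw hsumd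
  have hw := diff_of_convex_add hqw hqv hsumd'
  have heq : (fun t => F t i j)
      = fun t => ((F t i i + 1 * F t i j + 1 * F t j i + 1 * 1 * F t j j)
        - (F t i i + (-1) * F t i j + (-1) * F t j i + (-1) * (-1) * F t j j)) / 4 := by
    funext t; rw [hs t]; ring
  rw [heq]
  exact (hv.sub hw).div_const 4

theorem differentiable_of_diagonal_differentiable {l : ℕ}
    (F : ℝ → Matrix (Fin l) (Fin l) ℝ) (hF : LownerConvexR F)
    (hsymm : ∀ t, (F t).IsSymm) (x : ℝ)
    (hdiag : ∀ i : Fin l, DifferentiableAt ℝ (fun t => F t i i) x) :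
    ∀ i j : Fin l, DifferentiableAt ℝ (fun t => F t i j) x :=
  differentiable_of_diagonal_differentiable' F (fun a b α h1 h2 => hF a b α h1 h2) hsymm x hdiag
end

section
/- Let F : ℝᵈ → Sˡ be Löwner-convex and M ∈ Sˡ be positive semidefinite. Then the Hadamard product function G_M(x) = M ⊙ F(x) is Löwner-convex, and for every x, the set { (M ⊙ V⁽¹⁾, …, M ⊙ V⁽ᵈ⁾) | V ∈ ∂F(x) } is contained in ∂G_M(x). -/
open Matrix
open scoped Matrix

def LownerConvex {d l : ℕ} (F : (Fin d → ℝ) → Matrix (Fin l) (Fin l) ℝ) : Prop :=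
  ∀ x y : Fin d → ℝ, ∀ α : ℝ, 0 ≤ α → α ≤ 1 →
    LownerLE (F (α • x + (1 - α) • y)) (α • F x + (1 - α) • F y)

def Subdiff {d l : ℕ} (F : (Fin d → ℝ) → Matrix (Fin l) (Fin l) ℝ) (x : Fin d → ℝ) :
    Set (Fin d → Matrix (Fin l) (Fin l) ℝ) :=
  {V | ∀ y : Fin d → ℝ, LownerLE (∑ i, (y i - x i) • V i) (F y - F x)}

/-- Schur product theorem. -/
lemma schur_psd {l : ℕ} {M N : Matrix (Fin l) (Fin l) ℝ}
    (hM : M.PosSemidef) (hN : N.PosSemidef) : (M.hadamard N).PosSemidef := by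
  obtain ⟨A, hA⟩ := open scoped MatrixOrder Matrix.Norms.L2Operator in
    (CStarAlgebra.nonneg_iff_eq_star_mul_self (a := M)).mp hM.nonneg
  rw [star_eq_conjTranspose] at hA
  obtain ⟨B, hB⟩ := open scoped MatrixOrder Matrix.Norms.L2Operator in
    (CStarAlgebra.nonneg_iff_eq_star_mul_self (a := N)).mp hN.nonneg
  rw [star_eq_conjTranspose] at hB
  have key : M.hadamard N
      = (kroneckerMap (· * ·) M N).submatrix (fun i => (i, i)) (fun i => (i, i)) := by
    ext i j
    simp [Matrix.hadamard, Matrix.kroneckerMap_apply]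
  rw [key]
  apply Matrix.PosSemidef.submatrix
  have h2 : (kroneckerMap (· * ·) Aᴴ Bᴴ) = (kroneckerMap (· * ·) A B)ᴴ := by
    ext i j
    simp [Matrix.conjTranspose_apply, Matrix.kroneckerMap_apply]
  rw [hA, hB, Matrix.mul_kronecker_mul, h2]
  exact Matrix.posSemidef_conjTranspose_mul_self _

lemma hadamard_sub {l : ℕ} (M X Y : Matrix (Fin l) (Fin l) ℝ) :
    M.hadamard (X - Y) = M.hadamard X - M.hadamard Y := by
  ext i j; simp [Matrix.hadamard, mul_sub]

lemma hadamard_smul' {l : ℕ} (M : Matrix (Fin l) (Fin l) ℝ) (c : ℝ)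
    (X : Matrix (Fin l) (Fin l) ℝ) : M.hadamard (c • X) = c • M.hadamard X := by
  ext i j; simp [Matrix.hadamard]; ring

lemma hadamard_add' {l : ℕ} (M X Y : Matrix (Fin l) (Fin l) ℝ) :
    M.hadamard (X + Y) = M.hadamard X + M.hadamard Y := by
  ext i j; simp [Matrix.hadamard, mul_add]

lemma hadamard_sum {l d : ℕ} (M : Matrix (Fin l) (Fin l) ℝ)
    (V : Fin d → Matrix (Fin l) (Fin l) ℝ) :
    M.hadamard (∑ i, V i) = ∑ i, M.hadamard (V i) := by
  ext i j
  simp [Matrix.hadamard, Matrix.sum_apply, Finset.mul_sum]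

lemma lownerLE_hadamard {l : ℕ} {A B M : Matrix (Fin l) (Fin l) ℝ} (hM : M.PosSemidef)
    (h : LownerLE A B) : LownerLE (M.hadamard A) (M.hadamard B) := by
  have := schur_psd hM h
  rwa [hadamard_sub] at this

theorem hadamard_subdiff {d l : ℕ}
    (F : (Fin d → ℝ) → Matrix (Fin l) (Fin l) ℝ) (hF : LownerConvex F)
    (M : Matrix (Fin l) (Fin l) ℝ) (hM : M.PosSemidef) :
    LownerConvex (fun x => M.hadamard (F x)) ∧
    (∀ (x : Fin d → ℝ) (V : Fin d → Matrix (Fin l) (Fin l) ℝ), V ∈ Subdiff F x →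
      (fun i => M.hadamard (V i)) ∈ Subdiff (fun x => M.hadamard (F x)) x) := by
  constructor
  · intro x y α hα hα1
    have h := lownerLE_hadamard hM (hF x y α hα hα1)
    simpa [hadamard_add', hadamard_smul'] using h
  · intro x V hV y
    have h := lownerLE_hadamard hM (hV y)
    have e1 : M.hadamard (∑ i, (y i - x i) • V i) = ∑ i, (y i - x i) • M.hadamard (V i) := by
      rw [show (∑ i, (y i - x i) • V i) = ∑ i, ((y i - x i) • V i) from rfl,
        hadamard_sum]
      exact Finset.sum_congr rfl fun i _ => hadamard_smul' M _ _
    rw [hadamard_sub, e1] at h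
    exact h
end
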